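/- arXiv:1409.6142 — 2 statements merged into one kernel-verified Lean document; each statement's English description precedes it below -/
import Mathlib

section
/- Under the standing setup: for every orbital word u over Q and every state q ∈ Q, there exist infinitely many words w over Q such that the word u w q is orbital. (In the tree of orbital words, the subtree rooted at any orbital word contains infinitely many edges labeled by each state.) -/
namespace MealyFormal

variable {Q X : Type*}

/-- Extended transition function of the dual automaton: the action of a letter
`i ∈ Σ` on words over the stateset `Q`, defined by
`δ_i(ε) = ε` and `δ_i(x w) = δ_i(x) δ_{ρ_x(i)}(w)`. -/
def dExt (δ : X → Q → Q) (ρ : Q → X → X) : X → List Q → List Q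
  | _, [] => []
  | i, x :: w => δ i x :: dExt δ ρ (ρ x i) w

/-- The action `δ_s = δ_{s_n} ∘ ⋯ ∘ δ_{s_1}` of a word `s` over `Σ` on words over `Q`. -/
def dWord (δ : X → Q → Q) (ρ : Q → X → X) : List X → List Q → List Q
  | [], u => u
  | i :: s, u => dWord δ ρ s (dExt δ ρ i u)

/-- Extended production function: the action of a state `x ∈ Q` on words over the
alphabet `Σ`, defined by `ρ_x(ε) = ε` and `ρ_x(i s) = ρ_x(i) ρ_{δ_i(x)}(s)`. -/
def rExt (δ : X → Q → Q) (ρ : Q → X → X) : Q → List X → List X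
  | _, [] => []
  | x, i :: s => ρ x i :: rExt δ ρ (δ i x) s

/-- The action `ρ_u = ρ_{x_n} ∘ ⋯ ∘ ρ_{x_1}` of a word `u = x_1⋯x_n` over `Q`
on words over `Σ`. -/
def rWord (δ : X → Q → Q) (ρ : Q → X → X) : List Q → List X → List X
  | [], s => s
  | x :: u, s => rWord δ ρ u (rExt δ ρ x s)

/-- `v` lies in the orbit of `u` under the action of the dual automaton. -/
def InOrbit (δ : X → Q → Q) (ρ : Q → X → X) (u v : List Q) : Prop :=
  ∃ s : List X, dWord δ ρ s u = v

/-- The orbit (connected component of the corresponding power) of a word over `Q`. -/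
def orbit (δ : X → Q → Q) (ρ : Q → X → X) (u : List Q) : Set (List Q) :=
  {v | InOrbit δ ρ u v}

/-- The action of the dual automaton on `Q^n` is transitive, i.e. `A^n` is connected. -/
def LevelTransitive (δ : X → Q → Q) (ρ : Q → X → X) (n : ℕ) : Prop :=
  ∀ u v : List Q, u.length = n → v.length = n → InOrbit δ ρ u v

/-- The label `ℓ(u x)` of the nonempty word `u x`:
the number of `z ∈ Q` with `u z` in the orbit of `u x`. -/
noncomputable def label (δ : X → Q → Q) (ρ : Q → X → X) (u : List Q) (x : Q) : ℕ :=
  Set.ncard {z : Q | InOrbit δ ρ (u ++ [x]) (u ++ [z])}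

/-- Prefix of length `i` of the (infinite) word `w = w_1 w_2 ⋯`. -/
def pref (w : ℕ → Q) (i : ℕ) : List Q := (List.range i).map w

/-- The `n`-th power `u^n` of a word `u`. -/
def wpow (u : List Q) (n : ℕ) : List Q := (List.replicate n u).flatten

/-- The group generated by the Mealy automaton: the subgroup of permutations of `Σ*`
generated by the production functions `ρ_x`, `x ∈ Q`. -/
def autGroup (δ : X → Q → Q) (ρ : Q → X → X) : Subgroup (Equiv.Perm (List X)) :=
  Subgroup.closure {π : Equiv.Perm (List X) | ∃ q : Q, ⇑π = rExt δ ρ q}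

/-- The semigroup of maps `Σ* → Σ*` generated under composition by the `ρ_x`, `x ∈ Q`. -/
def prodSemigroup (δ : X → Q → Q) (ρ : Q → X → X) :
    Subsemigroup (Function.End (List X)) :=
  Subsemigroup.closure {f : Function.End (List X) | ∃ q : Q, f = rExt δ ρ q}

/-- The semigroup of maps `Q* → Q*` generated under composition by the `δ_i`, `i ∈ Σ`. -/
def dualSemigroup (δ : X → Q → Q) (ρ : Q → X → X) :
    Subsemigroup (Function.End (List Q)) :=
  Subsemigroup.closure {f : Function.End (List Q) | ∃ i : X, f = dExt δ ρ i}

/-- A word `w` over `Q` is orbital if all its factors of length `c+1`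
belong to the reduction orbit `O2`. -/
def Orbital (c : ℕ) (O2 : Set (List Q)) (w : List Q) : Prop :=
  ∀ f : List Q, f.length = c + 1 → f <:+: w → f ∈ O2

/-- A word is cyclically orbital if each of its powers is orbital. -/
def CycOrbital (c : ℕ) (O2 : Set (List Q)) (w : List Q) : Prop :=
  ∀ n : ℕ, Orbital c O2 (wpow w n)

/-- The standing setup: `A` is a connected invertible-reversible Mealy automaton
with 3 states, `0 < c = cd(A) < ∞`, and `Q^{c+1}` splits into exactly two orbits,
of sizes `2·3^c` and `3^c`; `O2` is the reduction orbit, of size `2·3^c`. -/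
structure StandingSetup (δ : X → Q → Q) (ρ : Q → X → X) (c : ℕ) (O2 : Set (List Q)) :
    Prop where
  card_three : Nat.card Q = 3
  invertible : ∀ q : Q, Function.Bijective (ρ q)
  reversible : ∀ i : X, Function.Bijective (δ i)
  connected : LevelTransitive δ ρ 1
  c_pos : 0 < c
  trans_c : LevelTransitive δ ρ c
  not_trans_succ : ¬ LevelTransitive δ ρ (c + 1)
  O2_is_orbit : ∃ w : List Q, w.length = c + 1 ∧ O2 = orbit δ ρ w
  O2_card : O2.ncard = 2 * 3 ^ c
  other_is_orbit : ∃ w : List Q, w.length = c + 1 ∧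
    orbit δ ρ w = {v : List Q | v.length = c + 1} \ O2
  other_card : ({v : List Q | v.length = c + 1} \ O2).ncard = 3 ^ c


section AuxBasic

variable (δ : X → Q → Q) (ρ : Q → X → X)

/-- Pushing one input letter through a word of states. -/
def push (ρ : Q → X → X) : List Q → X → X
  | [], i => i
  | x :: u, i => push ρ u (ρ x i)

lemma dExt_length (i : X) (w : List Q) : (dExt δ ρ i w).length = w.length := by
  induction w generalizing i with
  | nil => rfl
  | cons x w ih => simp [dExt, ih]

lemma dWord_length (s : List X) (w : List Q) : (dWord δ ρ s w).length = w.length := by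
  induction s generalizing w with
  | nil => rfl
  | cons i s ih => simp [dWord, ih, dExt_length]

lemma dExt_append (i : X) (u v : List Q) :
    dExt δ ρ i (u ++ v) = dExt δ ρ i u ++ dExt δ ρ (push ρ u i) v := by
  induction u generalizing i with
  | nil => rfl
  | cons x u ih => simp [dExt, push, ih]

/-- Pushing a word of input letters through a word of states. -/
def PUSH : List Q → List X → List X
  | _, [] => []
  | u, i :: s => push ρ u i :: PUSH (dExt δ ρ i u) s

lemma dWord_append (s : List X) (u v : List Q) :
    dWord δ ρ s (u ++ v) = dWord δ ρ s u ++ dWord δ ρ (PUSH δ ρ u s) v := by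
  induction s generalizing u v with
  | nil => rfl
  | cons i s ih => simp [dWord, PUSH, dExt_append, ih]

lemma dWord_append_word (s t : List X) (w : List Q) :
    dWord δ ρ (s ++ t) w = dWord δ ρ t (dWord δ ρ s w) := by
  induction s generalizing w with
  | nil => rfl
  | cons i s ih => simp [dWord, ih]

lemma InOrbit_refl (u : List Q) : InOrbit δ ρ u u := ⟨[], rfl⟩

lemma InOrbit_trans {u v w : List Q} (h1 : InOrbit δ ρ u v) (h2 : InOrbit δ ρ v w) :
    InOrbit δ ρ u w := by
  obtain ⟨s, hs⟩ := h1; obtain ⟨t, ht⟩ := h2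
  exact ⟨s ++ t, by rw [dWord_append_word, hs, ht]⟩

lemma InOrbit_length {u v : List Q} (h : InOrbit δ ρ u v) : v.length = u.length := by
  obtain ⟨s, hs⟩ := h; rw [← hs, dWord_length]

lemma InOrbit_append_right {u u' : List Q} (h : InOrbit δ ρ u u') (v : List Q) :
    ∃ v' : List Q, v'.length = v.length ∧ InOrbit δ ρ (u ++ v) (u' ++ v') := by
  obtain ⟨s, hs⟩ := h
  exact ⟨dWord δ ρ (PUSH δ ρ u s) v, dWord_length _ _ _ _,
    ⟨s, by rw [dWord_append, hs]⟩⟩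

lemma InOrbit_cons (hρ : ∀ q : Q, Function.Surjective (ρ q)) :
    ∀ (s : List X) (u : List Q) (x : Q), ∃ (t : List X) (x' : Q),
      dWord δ ρ t (x :: u) = x' :: dWord δ ρ s u := by
  intro s
  induction s with
  | nil => exact fun u x => ⟨[], x, rfl⟩
  | cons i s ih =>
    intro u x
    obtain ⟨j, hj⟩ := hρ x i
    obtain ⟨t, x', ht⟩ := ih (dExt δ ρ i u) (δ j x)
    refine ⟨j :: t, x', ?_⟩
    show dWord δ ρ t (dExt δ ρ j (x :: u)) = x' :: dWord δ ρ s (dExt δ ρ i u)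
    rw [← ht]
    congr 1
    simp only [dExt, hj]

lemma ncard_len_set (h3 : Nat.card Q = 3) (n : ℕ) :
    ({l : List Q | l.length = n} : Set (List Q)).ncard = 3 ^ n := by
  have hfin : Finite Q := Nat.finite_of_card_ne_zero (by omega)
  have hft : Fintype Q := Fintype.ofFinite Q
  rw [← Nat.card_coe_set_eq]
  have e : ↥({l : List Q | l.length = n}) ≃ List.Vector Q n :=
    Equiv.subtypeEquivRight (fun _ => Iff.rfl)
  rw [Nat.card_congr e, Nat.card_eq_fintype_card, card_vector]
  rw [← Nat.card_eq_fintype_card, h3]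

end AuxBasic

section AuxSetup

variable {δ : X → Q → Q} {ρ : Q → X → X} {c : ℕ} {O2 : Set (List Q)}

lemma O1_mem_trans (hs : StandingSetup δ ρ c O2) {w w' : List Q}
    (hw : w ∈ ({v : List Q | v.length = c + 1} \ O2)) (h : InOrbit δ ρ w w') :
    w' ∈ ({v : List Q | v.length = c + 1} \ O2) := by
  obtain ⟨w1, hw1len, hw1orb⟩ := hs.other_is_orbit
  rw [← hw1orb] at hw ⊢
  exact InOrbit_trans δ ρ hw h

lemma O1_exists_base (hs : StandingSetup δ ρ c O2) :
    ∃ w1 : List Q, w1.length = c + 1 ∧ w1 ∈ ({v : List Q | v.length = c + 1} \ O2) := by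
  obtain ⟨w1, hw1len, hw1orb⟩ := hs.other_is_orbit
  refine ⟨w1, hw1len, ?_⟩
  rw [← hw1orb]
  exact InOrbit_refl δ ρ w1

lemma O1_take_injOn (hs : StandingSetup δ ρ c O2) :
    Set.InjOn (List.take c) ({v : List Q | v.length = c + 1} \ O2) := by
  have hfinQ : Finite Q := Nat.finite_of_card_ne_zero (by rw [hs.card_three]; omega)
  have hO1fin : ({v : List Q | v.length = c + 1} \ O2).Finite :=
    (List.finite_length_eq Q (c + 1)).subset Set.diff_subset
  have hsurj : Set.SurjOn (List.take c) ({v : List Q | v.length = c + 1} \ O2)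
      {l : List Q | l.length = c} := by
    intro v hv
    obtain ⟨w1, hw1len, hw1mem⟩ := O1_exists_base hs
    have hv1len : (w1.take c).length = c := by
      rw [List.length_take, hw1len]; omega
    obtain ⟨s, hsw⟩ := hs.trans_c (w1.take c) v hv1len hv
    obtain ⟨r', hr'len, hr'orb⟩ := InOrbit_append_right δ ρ ⟨s, hsw⟩ (w1.drop c)
    rw [List.take_append_drop] at hr'orb
    have hmem : v ++ r' ∈ ({v : List Q | v.length = c + 1} \ O2) :=
      O1_mem_trans hs hw1mem hr'orb
    exact ⟨v ++ r', hmem, List.take_left' hv⟩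
  have himg : (List.take c) '' ({v : List Q | v.length = c + 1} \ O2)
      = {l : List Q | l.length = c} := by
    refine Set.Subset.antisymm ?_ hsurj
    rintro y ⟨w, hw, rfl⟩
    have hwlen : w.length = c + 1 := hw.1
    show (w.take c).length = c
    rw [List.length_take, hwlen]; omega
  apply Set.injOn_of_ncard_image_eq ?_ hO1fin
  rw [himg, ncard_len_set hs.card_three c, hs.other_card]

lemma O1_drop_injOn (hs : StandingSetup δ ρ c O2) :
    Set.InjOn (List.drop 1) ({v : List Q | v.length = c + 1} \ O2) := by
  have hfinQ : Finite Q := Nat.finite_of_card_ne_zero (by rw [hs.card_three]; omega)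
  have hO1fin : ({v : List Q | v.length = c + 1} \ O2).Finite :=
    (List.finite_length_eq Q (c + 1)).subset Set.diff_subset
  have hsurj : Set.SurjOn (List.drop 1) ({v : List Q | v.length = c + 1} \ O2)
      {l : List Q | l.length = c} := by
    intro u hu
    obtain ⟨w1, hw1len, hw1mem⟩ := O1_exists_base hs
    match w1, hw1len with
    | x1 :: u1, hw1len =>
      have hu1len : u1.length = c := by simpa using hw1len
      obtain ⟨s, hsw⟩ := hs.trans_c u1 u hu1len hu
      obtain ⟨t, x', ht⟩ := InOrbit_cons δ ρ (fun q => (hs.invertible q).2) s u1 x1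
      have hd : dWord δ ρ t (x1 :: u1) = x' :: u := by rw [ht, hsw]
      have hmem : x' :: u ∈ ({v : List Q | v.length = c + 1} \ O2) :=
        O1_mem_trans hs hw1mem ⟨t, hd⟩
      exact ⟨x' :: u, hmem, by simp⟩
  have himg : (List.drop 1) '' ({v : List Q | v.length = c + 1} \ O2)
      = {l : List Q | l.length = c} := by
    refine Set.Subset.antisymm ?_ hsurj
    rintro y ⟨w, hw, rfl⟩
    have hwlen : w.length = c + 1 := hw.1
    show (w.drop 1).length = c
    rw [List.length_drop, hwlen]; omega
  apply Set.injOn_of_ncard_image_eq ?_ hO1fin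
  rw [himg, ncard_len_set hs.card_three c, hs.other_card]

lemma O1_right_unique (hs : StandingSetup δ ρ c O2) {v : List Q} {z z' : Q}
    (hv : v.length = c)
    (h1 : v ++ [z] ∈ ({v : List Q | v.length = c + 1} \ O2))
    (h2 : v ++ [z'] ∈ ({v : List Q | v.length = c + 1} \ O2)) : z = z' := by
  have he : v ++ [z] = v ++ [z'] :=
    O1_take_injOn hs h1 h2 (by rw [List.take_left' hv, List.take_left' hv])
  simpa using he

lemma O1_left_unique (hs : StandingSetup δ ρ c O2) {u : List Q} {x y : Q}
    (hu : u.length = c)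
    (h1 : x :: u ∈ ({v : List Q | v.length = c + 1} \ O2))
    (h2 : y :: u ∈ ({v : List Q | v.length = c + 1} \ O2)) : x = y := by
  have he : x :: u = y :: u := O1_drop_injOn hs h1 h2 (by simp)
  simpa using he

lemma orbital_of_length_le {w : List Q} (h : w.length ≤ c) : Orbital c O2 w := by
  intro f hf hinf
  have h2 := hinf.length_le
  rw [hf] at h2
  omega

lemma orbital_snoc_iff {t : List Q} (hlen : c ≤ t.length) (z : Q) :
    Orbital c O2 (t ++ [z]) ↔
      Orbital c O2 t ∧ t.drop (t.length - c) ++ [z] ∈ O2 := by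
  constructor
  · intro h
    refine ⟨fun f hf hinf => h f hf (hinf.trans (List.prefix_append t [z]).isInfix), ?_⟩
    apply h
    · rw [List.length_append, List.length_drop]; simp; omega
    · obtain ⟨p, hp⟩ := List.drop_suffix (t.length - c) t
      have hsuf : t.drop (t.length - c) ++ [z] <:+ t ++ [z] :=
        ⟨p, by rw [← List.append_assoc, hp]⟩
      exact hsuf.isInfix
  · rintro ⟨horb, hmem⟩ f hf hinf
    obtain ⟨p, s2, he⟩ := hinf
    rcases List.eq_nil_or_concat s2 with rfl | ⟨s3, y, rfl⟩
    · rw [List.append_nil] at he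
      have hsuf1 : f <:+ t ++ [z] := ⟨p, he⟩
      have hsuf2 : t.drop (t.length - c) ++ [z] <:+ t ++ [z] := by
        obtain ⟨p2, hp2⟩ := List.drop_suffix (t.length - c) t
        exact ⟨p2, by rw [← List.append_assoc, hp2]⟩
      have hlen2 : f.length = (t.drop (t.length - c) ++ [z]).length := by
        rw [hf, List.length_append, List.length_drop]; simp; omega
      have hfe : f = t.drop (t.length - c) ++ [z] := by
        rcases List.suffix_or_suffix_of_suffix hsuf1 hsuf2 with h | h
        · exact h.eq_of_length hlen2
        · exact (h.eq_of_length hlen2.symm).symm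
      rw [hfe]; exact hmem
    · rw [List.concat_eq_append] at he
      have he2 : (p ++ f ++ s3) ++ [y] = t ++ [z] := by
        rw [← he]; simp [List.append_assoc]
      obtain ⟨he3, -⟩ := List.append_inj' he2 rfl
      exact horb f hf ⟨p, s3, he3⟩

lemma exists_two_ne (h3 : Nat.card Q = 3) (q : Q) :
    ∃ a b : Q, a ≠ b ∧ a ≠ q ∧ b ≠ q := by
  classical
  have hfin : Finite Q := Nat.finite_of_card_ne_zero (by omega)
  have hft : Fintype Q := Fintype.ofFinite Q
  have hcard : Fintype.card Q = 3 := by rw [← Nat.card_eq_fintype_card, h3]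
  have h2 : 1 < (Finset.univ.erase q).card := by
    rw [Finset.card_erase_of_mem (Finset.mem_univ q), Finset.card_univ, hcard]
    norm_num
  obtain ⟨a, ha, b, hb, hab⟩ := Finset.one_lt_card.mp h2
  exact ⟨a, b, hab, (Finset.mem_erase.mp ha).1, (Finset.mem_erase.mp hb).1⟩

lemma exists_good_ext (hs : StandingSetup δ ρ c O2) (q : Q) (t : List Q)
    (ht : Orbital c O2 t) (hlen : c ≤ t.length) :
    ∃ w : List Q, Orbital c O2 (t ++ w ++ [q]) := by
  by_contra H
  push_neg at H
  obtain ⟨a, b, hab, haq, hbq⟩ := exists_two_ne hs.card_three q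
  have safe : ∀ w : List Q, (∀ x ∈ w, x ≠ q) → Orbital c O2 (t ++ w) := by
    intro w
    induction w using List.reverseRecOn with
    | nil => intro _; simpa using ht
    | append_singleton w z ih =>
      intro hmem
      have hw : Orbital c O2 (t ++ w) := ih (fun x hx => hmem x (List.mem_append_left _ hx))
      have hlen2 : c ≤ (t ++ w).length := by rw [List.length_append]; omega
      have hnq : ¬ Orbital c O2 (t ++ w ++ [q]) := H w
      have hvlen : ((t ++ w).drop ((t ++ w).length - c)).length = c := by
        rw [List.length_drop]; omega
      have hbadq : (t ++ w).drop ((t ++ w).length - c) ++ [q]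
          ∈ ({v : List Q | v.length = c + 1} \ O2) := by
        refine ⟨?_, ?_⟩
        · show _ = c + 1
          rw [List.length_append, hvlen]; rfl
        · intro hmem2
          exact hnq ((orbital_snoc_iff hlen2 q).mpr ⟨hw, hmem2⟩)
      have hz : z ≠ q := hmem z (List.mem_append_right _ (by simp))
      have hgood : (t ++ w).drop ((t ++ w).length - c) ++ [z] ∈ O2 := by
        by_contra hno
        refine hz (O1_right_unique hs hvlen ⟨?_, hno⟩ hbadq)
        show _ = c + 1
        rw [List.length_append, hvlen]; rfl
      have hres := (orbital_snoc_iff hlen2 z).mpr ⟨hw, hgood⟩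
      rwa [List.append_assoc] at hres
  have hc1 : c - 1 + 1 = c := by have := hs.c_pos; omega
  have key : ∀ x : Q, x ≠ q → x :: (List.replicate (c - 1) a ++ [q])
      ∈ ({v : List Q | v.length = c + 1} \ O2) := by
    intro x hx
    have hmem : ∀ y ∈ x :: List.replicate (c - 1) a, y ≠ q := by
      intro y hy
      rcases List.mem_cons.mp hy with rfl | hy2
      · exact hx
      · rw [List.eq_of_mem_replicate hy2]; exact haq
    have hsafe := safe _ hmem
    have hwlen : (x :: List.replicate (c - 1) a).length = c := by
      simp [List.length_replicate, hc1]
    have hlen2 : c ≤ (t ++ (x :: List.replicate (c - 1) a)).length := by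
      rw [List.length_append]; omega
    have hnq : ¬ Orbital c O2 (t ++ (x :: List.replicate (c - 1) a) ++ [q]) :=
      H (x :: List.replicate (c - 1) a)
    have hdrop : (t ++ (x :: List.replicate (c - 1) a)).drop
        ((t ++ (x :: List.replicate (c - 1) a)).length - c)
        = x :: List.replicate (c - 1) a := by
      rw [List.length_append, hwlen, Nat.add_sub_cancel]
      exact List.drop_left
    have hres : (x :: List.replicate (c - 1) a) ++ [q]
        ∈ ({v : List Q | v.length = c + 1} \ O2) := by
      refine ⟨?_, ?_⟩
      · show _ = c + 1
        rw [List.length_append, hwlen]; rfl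
      · intro hm2
        apply hnq
        apply (orbital_snoc_iff hlen2 q).mpr ⟨hsafe, ?_⟩
        rw [hdrop]; exact hm2
    rwa [List.cons_append] at hres
  have ha' := key a haq
  have hb' := key b hbq
  have hulen : (List.replicate (c - 1) a ++ [q]).length = c := by
    simp [List.length_replicate, hc1]
  exact hab (O1_left_unique hs hulen ha' hb')

end AuxSetup


/-- Under the standing setup, for every orbital word `u` and every
state `q`, there are infinitely many words `w` with `u ++ w ++ [q]` orbital (the
subtree of the tree of orbital words rooted at `u` has infinitely many edges
labeled by each state). -/
theorem orbital_subtree_infinitely_many_labels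
    {Q X : Type*} (δ : X → Q → Q) (ρ : Q → X → X) (c : ℕ) (O2 : Set (List Q))
    (hs : StandingSetup δ ρ c O2)
    (u : List Q) (hu : Orbital c O2 u) (q : Q) :
    {w : List Q | Orbital c O2 (u ++ w ++ [q])}.Infinite := by
  classical
  obtain ⟨a0, b0, -, -, -⟩ := exists_two_ne hs.card_three q
  have key : ∀ n : ℕ, ∃ w : List Q, n ≤ w.length ∧ Orbital c O2 (u ++ w ++ [q]) ∧
      c ≤ (u ++ w ++ [q]).length := by
    intro n
    induction n with
    | zero =>
      have hpad : Orbital c O2 (u ++ List.replicate (c - u.length) a0) := by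
        rcases le_or_gt c u.length with h | h
        · have h0 : c - u.length = 0 := Nat.sub_eq_zero_of_le h
          rw [h0]; simpa using hu
        · apply orbital_of_length_le
          rw [List.length_append, List.length_replicate]; omega
      have hplen : c ≤ (u ++ List.replicate (c - u.length) a0).length := by
        rw [List.length_append, List.length_replicate]; omega
      obtain ⟨w', hw'⟩ := exists_good_ext hs q _ hpad hplen
      have heq : u ++ (List.replicate (c - u.length) a0 ++ w') ++ [q]
          = (u ++ List.replicate (c - u.length) a0) ++ w' ++ [q] := by
        simp [List.append_assoc]
      refine ⟨List.replicate (c - u.length) a0 ++ w', Nat.zero_le _, ?_, ?_⟩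
      · rw [heq]; exact hw'
      · rw [heq, List.length_append, List.length_append, List.length_append,
          List.length_replicate]
        simp; omega
    | succ n ih =>
      obtain ⟨w, hwl, hworb, hwlen⟩ := ih
      obtain ⟨w'', hw''⟩ := exists_good_ext hs q (u ++ w ++ [q]) hworb hwlen
      have heq : u ++ (w ++ [q] ++ w'') ++ [q] = (u ++ w ++ [q]) ++ w'' ++ [q] := by
        simp [List.append_assoc]
      refine ⟨w ++ [q] ++ w'', ?_, ?_, ?_⟩
      · rw [List.length_append, List.length_append]; simp; omega
      · rw [heq]; exact hw''
      · rw [heq]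
        simp only [List.length_append, List.length_singleton] at hwlen ⊢
        omega
  by_contra hfin
  rw [Set.not_infinite] at hfin
  obtain ⟨N, hN⟩ := (hfin.image List.length).bddAbove
  obtain ⟨w, hwl, hworb, -⟩ := key (N + 1)
  have hle : w.length ≤ N := hN (Set.mem_image_of_mem List.length hworb)
  omega


end MealyFormal
end

section
/- Under the standing setup: every orbital word over Q of length at least c·(1 + 3^c) admits a nonempty factor which is cyclically orbital; in particular cyclically orbital words exist. -/
namespace MealyFormal

variable {Q X : Type*}

/-- Auxiliary: a prefix of bounded length is a prefix of the corresponding take. -/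
private lemma prefix_take_of_le' {α : Type*} {p l : List α} (h : p <+: l) {t : ℕ}
    (ht : p.length ≤ t) : p <+: l.take t := by
  obtain ⟨r, rfl⟩ := h
  rw [List.take_append, List.take_of_length_le ht]
  exact ⟨r.take (t - p.length), rfl⟩

private lemma wpow_succ {Q : Type*} (v : List Q) (n : ℕ) :
    wpow v (n + 1) = v ++ wpow v n := by
  simp [wpow, List.replicate_succ]

/-- Key combinatorial lemma: if `c ≤ |v|`, every factor of length `c+1` of a power
of `v` is a factor of `v ++ v.take c`. -/
private lemma infix_wpow_infix {α : Type*} {v : List α} {c : ℕ} (hv : c ≤ v.length) :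
    ∀ (n : ℕ) (f : List α), f.length = c + 1 → f <:+: wpow v n →
      f <:+: v ++ v.take c := by
  intro n
  induction n with
  | zero =>
      intro f hf hinf
      have : f = [] := List.eq_nil_of_infix_nil (by simpa [wpow] using hinf)
      simp [this] at hf
  | succ m ih =>
      intro f hf hinf
      rw [wpow_succ] at hinf
      obtain ⟨s, t, he⟩ := hinf
      by_cases hsl : v.length ≤ s.length
      · -- f lives inside wpow v m
        have hsp : s <+: v ++ wpow v m := ⟨f ++ t, by rw [← he]; simp [List.append_assoc]⟩
        have hvs : v <+: s :=
          List.prefix_of_prefix_length_le (List.prefix_append v (wpow v m)) hsp hsl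
        obtain ⟨s', rfl⟩ := hvs
        have he' : s' ++ f ++ t = wpow v m := by
          apply List.append_cancel_left (as := v)
          rw [← he]; simp [List.append_assoc]
        exact ih f hf ⟨s', t, he'⟩
      · push_neg at hsl
        have h1 : s ++ f <+: v ++ wpow v m := ⟨t, he⟩
        have h2 : s ++ f <+: (v ++ wpow v m).take (v.length + c) := by
          apply prefix_take_of_le' h1
          rw [List.length_append, hf]; omega
        have h3 : (v ++ wpow v m).take (v.length + c) = v ++ (wpow v m).take c := by
          rw [List.take_append, List.take_of_length_le (by omega),
            Nat.add_sub_cancel_left]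
        have h4 : (wpow v m).take c <+: v.take c := by
          cases m with
          | zero => simp [wpow]
          | succ k =>
              rw [wpow_succ, List.take_append,
                Nat.sub_eq_zero_of_le hv, List.take_zero, List.append_nil]
        have h5 : v ++ (wpow v m).take c <+: v ++ v.take c := by
          obtain ⟨r, hr⟩ := h4
          exact ⟨r, by rw [List.append_assoc, hr]⟩
        have h6 : s ++ f <+: v ++ v.take c := (h2.trans (h3 ▸ h5 : _))
        exact (List.suffix_append s f).isInfix.trans h6.isInfix

/-- Under the standing setup, every orbital word of length at least
`c·(1 + 3^c)` admits a nonempty cyclically orbital factor; in particular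
cyclically orbital words exist. -/
theorem orbital_has_cyclically_orbital_factor
    {Q X : Type*} (δ : X → Q → Q) (ρ : Q → X → X) (c : ℕ) (O2 : Set (List Q))
    (hs : StandingSetup δ ρ c O2)
    (w : List Q) (hw : Orbital c O2 w) (hlen : c * (1 + 3 ^ c) ≤ w.length) :
    ∃ v : List Q, v ≠ [] ∧ v <:+: w ∧ CycOrbital c O2 v := by
  classical
  have hc : 0 < c := hs.c_pos
  have hQfin : Finite Q := Nat.finite_of_card_ne_zero (by rw [hs.card_three]; omega)
  have hQft : Fintype Q := Fintype.ofFinite Q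
  set N := 3 ^ c with hN
  -- block lengths
  have hblock : ∀ k : ℕ, k ≤ N → k * c + c ≤ w.length := by
    intro k hk
    have h1 : k * c ≤ N * c := Nat.mul_le_mul_right c hk
    have h2 : c * (1 + N) = N * c + c := by ring
    omega
  have hblen : ∀ k : ℕ, k ≤ N → ((w.drop (k * c)).take c).length = c := by
    intro k hk
    have := hblock k hk
    rw [List.length_take, List.length_drop]
    omega
  -- pigeonhole on blocks
  have hcardQ : Fintype.card Q = 3 := by
    rw [← Nat.card_eq_fintype_card, hs.card_three]
  let g : Fin (N + 1) → List.Vector Q c := fun k =>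
    ⟨(w.drop ((k : ℕ) * c)).take c, hblen (k : ℕ) (by omega)⟩
  obtain ⟨i, j, hij, hgeq⟩ :=
    Fintype.exists_ne_map_eq_of_card_lt g
      (by rw [card_vector, hcardQ, Fintype.card_fin]; omega)
  have hgeq' : (w.drop ((i : ℕ) * c)).take c = (w.drop ((j : ℕ) * c)).take c :=
    congrArg List.Vector.toList hgeq
  -- arrange a < b
  obtain ⟨a, b, hab, hbN, heqab⟩ :
      ∃ a b : ℕ, a < b ∧ b ≤ N ∧ (w.drop (a * c)).take c = (w.drop (b * c)).take c := by
    rcases lt_or_gt_of_ne (Fin.val_ne_of_ne hij) with h | h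
    · exact ⟨i, j, h, by omega, hgeq'⟩
    · exact ⟨j, i, h, by omega, hgeq'.symm⟩
  set A := a * c with hA
  set B := b * c with hB
  have hAB : A < B := by
    exact (Nat.mul_lt_mul_right hc).mpr hab
  have hcBA : c ≤ B - A := by
    have h1 : (b - a) * c = B - A := Nat.sub_mul b a c
    have h2 : c ≤ (b - a) * c := Nat.le_mul_of_pos_left c (by omega)
    omega
  have hBlen : B + c ≤ w.length := hblock b hbN
  set v : List Q := (w.drop A).take (B - A) with hv
  have hdlen : (w.drop A).length = w.length - A := List.length_drop (i := A) (l := w)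
  have hvlen : v.length = B - A := by
    rw [hv, List.length_take, hdlen]; omega
  have hcv : c ≤ v.length := by omega
  have hvne : v ≠ [] := by
    intro h
    rw [h] at hvlen
    simp at hvlen
    omega
  -- v is an infix of w
  have hvw : v <:+: w :=
    ((List.take_prefix _ _).isInfix).trans (List.drop_suffix A w).isInfix
  -- z = v ++ v.take c is an infix of w
  set z : List Q := (w.drop A).take (B - A + c) with hzdef
  have hzw : z <:+: w :=
    ((List.take_prefix _ _).isInfix).trans (List.drop_suffix A w).isInfix
  have hztake : v.take c = (w.drop A).take c := by
    rw [hv, List.take_take, Nat.min_eq_left hcBA]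
  have hz : z = v ++ v.take c := by
    rw [hzdef, List.take_add, ← hv]
    congr 1
    rw [List.drop_drop]
    have hAB' : A + (B - A) = B := by omega
    rw [hAB', hztake, heqab]
  -- conclusion
  refine ⟨v, hvne, hvw, ?_⟩
  intro n f hf hinf
  have hfz : f <:+: z := by
    rw [hz]
    exact infix_wpow_infix hcv n f hf hinf
  exact hw f hf (hfz.trans hzw)


end MealyFormal
end
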